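/- Let D^A be a curve with one boundary end on L(1,2) in a class (k, ε) with ε = ±1, intersecting Σ a total of m times and E a total of n times, such that the completed class K = D^A − mΣ + nE is a disk class in ℂ² with boundary on L(1,2). Using Maslov and area relations μ(K) = μ(D^A) − 6m + 2n and area(K) = area(D^A) − 5m + 3n together with area(K) = μ(K)/2 + ε·1 determined by the boundary class, one deduces that area(D^A) is even whenever μ(D^A) = 2. In particular if m = n, then area(D^A) = 2. -/
import Mathlib

/-- Arithmetic of Lemma 3.5 for the plane `D^A`: if `μ(D^A) = 2`, the
boundary lies on `L(1,2)` in a class `(k, ε)` with `ε = ±1`, `D^A` meets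
`Σ` a total of `m` times and `E` a total of `n` times, and the completed
class `K = D^A - mΣ + nE` satisfies `μ(K) = 2 - 6m + 2n`,
`area(K) = area(D^A) - 5m + 3n` and `area(K) = μ(K)/2 + ε`, then
`area(D^A)` is even; and if moreover `m = n` (and the area is positive)
then `area(D^A) = 2`. -/
theorem area_DA_even (m n ε : ℤ) (aDA aK : ℝ) (μK : ℤ)
    (hε : ε = 1 ∨ ε = -1)
    (hpos : 0 < aDA)
    (hμK : μK = 2 - 6 * m + 2 * n)
    (haK : aK = aDA - 5 * m + 3 * n)
    (harea : aK = (μK : ℝ) / 2 + ε) :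
    (∃ j : ℤ, aDA = 2 * j) ∧ (m = n → aDA = 2) := by
  subst hμK haK
  rcases hε with h | h <;> subst h
  · refine ⟨⟨m - n + 1, by push_cast at harea ⊢; linarith⟩, fun hmn => ?_⟩
    subst hmn; push_cast at harea; linarith
  · refine ⟨⟨m - n, by push_cast at harea ⊢; linarith⟩, fun hmn => ?_⟩
    subst hmn; push_cast at harea; linarith
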